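/- Let (Ω, ℱ) be a measurable space, let A_1, …, A_k be a measurable partition of Ω, let c_1, …, c_k ∈ ℝ, and let φ = Σ_{i=1}^k c_i·1_{A_i}. Then for every probability measure μ on (Ω, ℱ), sup{ ∫ φ dν − KL(μ‖ν) : ν a probability measure on (Ω, ℱ) } = sup{ ∫ φ dν − klᵏ((μ(A_1),…,μ(A_k)) ‖ (ν(A_1),…,ν(A_k))) : ν a probability measure on (Ω, ℱ) }, where klᵏ(p‖q) = Σ_{i: p_i>0} p_i·log(p_i/q_i) for probability vectors p, q on {1,…,k}, equal to ∞ if q_i = 0 < p_i for some i. -/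

import Mathlib

open MeasureTheory
open scoped ENNReal NNReal Classical

/-- Kullback–Leibler divergence between two measures, valued in `[0, ∞]`.
For probability measures `μ ≪ ν`, the negative part of `llr μ ν` is always
`μ`-integrable, so non-integrability corresponds to a divergence of `∞`. -/
noncomputable def KLm {Ω : Type*} [MeasurableSpace Ω] (μ ν : Measure Ω) : ℝ≥0∞ :=
  if μ ≪ ν ∧ Integrable (llr μ ν) μ then ENNReal.ofReal (∫ x, llr μ ν x ∂μ) else ⊤

/-- Kullback–Leibler divergence between two vectors on `{1,…,k}`, valued in
`[0, ∞]`: `Σ_{i : p i > 0} p i · log (p i / q i)`, equal to `∞` when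
`q i = 0 < p i` for some `i`. -/
noncomputable def klVec {k : ℕ} (p q : Fin k → ℝ) : ℝ≥0∞ :=
  if ∀ i, 0 < p i → 0 < q i then
    ENNReal.ofReal (∑ i, if 0 < p i then p i * Real.log (p i / q i) else 0)
  else ⊤

lemma integral_phi {Ω : Type*} [MeasurableSpace Ω] {k : ℕ} (A : Fin k → Set Ω)
    (hA : ∀ i, MeasurableSet (A i)) (c : Fin k → ℝ) (ν : Measure Ω) [IsFiniteMeasure ν] :
    ∫ ω, ∑ i, c i * (A i).indicator (fun _ => (1 : ℝ)) ω ∂ν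
      = ∑ i, c i * (ν (A i)).toReal := by
  have hint : ∀ i : Fin k, Integrable (fun ω => c i * (A i).indicator (fun _ => (1:ℝ)) ω) ν := by
    intro i
    exact ((integrable_indicator_iff (hA i)).2 (integrableOn_const (measure_ne_top ν _))).const_mul _
  rw [integral_finset_sum _ (fun i _ => hint i)]
  refine Finset.sum_congr rfl fun i _ => ?_
  rw [integral_const_mul, integral_indicator_const _ (hA i)]
  simp [mul_comm, Measure.real]

lemma gibbs {Ω : Type*} [MeasurableSpace Ω] {μ ν : Measure Ω} [IsProbabilityMeasure μ]
    [IsProbabilityMeasure ν] (hac : μ ≪ ν) (hint : Integrable (llr μ ν) μ)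
    {S : Set Ω} (hS : MeasurableSet S) :
    (μ S).toReal * Real.log ((μ S).toReal / (ν S).toReal) ≤ ∫ x in S, llr μ ν x ∂μ := by
  rcases eq_or_ne (μ S) 0 with h0 | h0
  · simp [h0, Measure.restrict_eq_zero.2 h0]
  · have hνS : ν S ≠ 0 := fun h => h0 (hac h)
    have hμSr : 0 < (μ S).toReal := ENNReal.toReal_pos h0 (measure_ne_top μ S)
    have hνSr : 0 < (ν S).toReal := ENNReal.toReal_pos hνS (measure_ne_top ν S)
    set r : ℝ := (μ S).toReal / (ν S).toReal with hr
    have hrpos : 0 < r := div_pos hμSr hνSr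
    -- the function h
    set h : Ω → ℝ := fun x => ((μ.rnDeriv ν x)⁻¹).toReal * r with hh
    -- a.e. positivity facts
    have hpos : ∀ᵐ x ∂μ, 0 < μ.rnDeriv ν x := Measure.rnDeriv_pos hac
    have hlt : ∀ᵐ x ∂μ, μ.rnDeriv ν x < ⊤ := hac.ae_le (Measure.rnDeriv_lt_top μ ν)
    -- lintegral bound
    have hlint : ∫⁻ x in S, (μ.rnDeriv ν x)⁻¹ ∂μ ≤ ν S := by
      rw [← setLIntegral_rnDeriv_mul (f := fun x => (μ.rnDeriv ν x)⁻¹) hac (Measurable.inv (Measure.measurable_rnDeriv μ ν)).aemeasurable hS]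
      calc ∫⁻ x in S, μ.rnDeriv ν x * (μ.rnDeriv ν x)⁻¹ ∂ν
          ≤ ∫⁻ _ in S, 1 ∂ν := lintegral_mono fun x => ENNReal.mul_inv_le_one _
        _ = ν S := by simp
    have hint_inv : Integrable (fun x => ((μ.rnDeriv ν x)⁻¹).toReal) (μ.restrict S) := by
      refine integrable_toReal_of_lintegral_ne_top
        (Measurable.inv (Measure.measurable_rnDeriv μ ν)).aemeasurable ?_
      exact ne_top_of_le_ne_top (measure_ne_top ν S) hlint
    have hint_h : Integrable h (μ.restrict S) := hint_inv.mul_const r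
    -- integral of h bounded
    have hInth : ∫ x in S, h x ∂μ ≤ (μ S).toReal := by
      have h1 : ∫ x in S, ((μ.rnDeriv ν x)⁻¹).toReal ∂μ ≤ (ν S).toReal := by
        rw [integral_toReal (f := fun x => (μ.rnDeriv ν x)⁻¹) (Measurable.inv (Measure.measurable_rnDeriv μ ν)).aemeasurable
          (ae_restrict_of_ae (hpos.mono fun x hx => ENNReal.inv_lt_top.2 hx))]
        exact ENNReal.toReal_mono (measure_ne_top ν S) hlint
      calc ∫ x in S, h x ∂μ = (∫ x in S, ((μ.rnDeriv ν x)⁻¹).toReal ∂μ) * r := by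
            rw [← integral_mul_const]
        _ ≤ (ν S).toReal * r := by
            exact mul_le_mul_of_nonneg_right h1 hrpos.le
        _ = (μ S).toReal := by rw [hr, mul_div_cancel₀ _ hνSr.ne']
    -- pointwise inequality a.e.
    have hptwise : ∀ᵐ x ∂μ.restrict S, Real.log r - llr μ ν x ≤ h x - 1 := by
      refine ae_restrict_of_ae ((hpos.and hlt).mono fun x ⟨hx0, hxt⟩ => ?_)
      have ht : 0 < (μ.rnDeriv ν x).toReal := ENNReal.toReal_pos hx0.ne' hxt.ne
      have hhx : h x = r / (μ.rnDeriv ν x).toReal := by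
        rw [hh]; simp only [ENNReal.toReal_inv]; ring
      have hhpos : 0 < h x := hhx ▸ div_pos hrpos ht
      have := Real.log_le_sub_one_of_pos hhpos
      have hlog : Real.log (h x) = Real.log r - llr μ ν x := by
        rw [hhx, Real.log_div hrpos.ne' ht.ne', llr_def]
      linarith
    have hint_l : Integrable (fun x => Real.log r - llr μ ν x) (μ.restrict S) :=
      (integrable_const _).sub hint.integrableOn
    have key : ∫ x in S, (Real.log r - llr μ ν x) ∂μ ≤ ∫ x in S, (h x - 1) ∂μ :=
      integral_mono_ae hint_l (hint_h.sub (integrable_const _)) hptwise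
    rw [integral_sub (integrable_const _) hint.integrableOn,
      integral_sub hint_h (integrable_const _)] at key
    simp only [integral_const, Measure.real, Measure.restrict_apply_univ, smul_eq_mul, mul_one] at key
    have := hInth
    nlinarith [hInth, key]

lemma construct {Ω : Type*} [MeasurableSpace Ω] {k : ℕ} (A : Fin k → Set Ω)
    (hAmeas : ∀ i, MeasurableSet (A i))
    (hAdisj : Pairwise (Function.onFun Disjoint A))
    (hAcover : (⋃ i, A i) = Set.univ)
    (μ ν : Measure Ω) [IsProbabilityMeasure μ] [IsProbabilityMeasure ν]
    (hq : ∀ i, μ (A i) ≠ 0 → ν (A i) ≠ 0) :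
    ∃ ν' : Measure Ω, IsProbabilityMeasure ν' ∧ (∀ i, ν' (A i) = ν (A i)) ∧
      KLm μ ν' = klVec (fun i => (μ (A i)).toReal) (fun i => (ν (A i)).toReal) := by
  have hΩ : Nonempty Ω := by
    by_contra hc
    rw [not_nonempty_iff] at hc
    have h1 : μ Set.univ = 1 := measure_univ
    rw [Set.univ_eq_empty_iff.2 hc, measure_empty] at h1
    exact zero_ne_one h1
  set x : Fin k → Ω := fun i => if h : (A i).Nonempty then h.choose else Classical.arbitrary Ω
    with hxdef
  have hx : ∀ i, (A i).Nonempty → x i ∈ A i := by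
    intro i h
    simp only [hxdef, dif_pos h]
    exact h.choose_spec
  have hxmem : ∀ i, ν (A i) ≠ 0 → x i ∈ A i := fun i h =>
    hx i (Set.nonempty_iff_ne_empty.2 fun he => h (by rw [he]; exact measure_empty))
  set w : Fin k → Measure Ω := fun i =>
    if μ (A i) = 0 then (ν (A i)) • Measure.dirac (x i)
    else (ν (A i) / μ (A i)) • μ.restrict (A i) with hwdef
  set ν' : Measure Ω := Measure.sum w with hν'def
  -- values of w i on the partition sets
  have hwA : ∀ i j, w i (A j) = if i = j then ν (A i) else 0 := by
    intro i j
    by_cases hij : i = j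
    · subst hij
      rw [if_pos rfl]
      by_cases hμ : μ (A i) = 0
      · rw [hwdef]
        simp only [if_pos hμ, Measure.smul_apply, smul_eq_mul]
        by_cases hνi : ν (A i) = 0
        · simp [hνi]
        · rw [Measure.dirac_apply' _ (hAmeas i), Set.indicator_of_mem (hxmem i hνi)]
          simp
      · rw [hwdef]
        simp only [if_neg hμ, Measure.smul_apply, smul_eq_mul,
          Measure.restrict_apply (hAmeas i), Set.inter_self]
        exact ENNReal.div_mul_cancel hμ (measure_ne_top μ _)
    · rw [if_neg hij]
      by_cases hμ : μ (A i) = 0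
      · rw [hwdef]
        simp only [if_pos hμ, Measure.smul_apply, smul_eq_mul]
        by_cases hνi : ν (A i) = 0
        · simp [hνi]
        · rw [Measure.dirac_apply' _ (hAmeas j),
            Set.indicator_of_notMem (Set.disjoint_left.1 (hAdisj hij) (hxmem i hνi))]
          simp
      · rw [hwdef]
        simp only [if_neg hμ, Measure.smul_apply, smul_eq_mul,
          Measure.restrict_apply (hAmeas j)]
        rw [(hAdisj (Ne.symm hij)).inter_eq, measure_empty, mul_zero]
  have hν'A : ∀ j, ν' (A j) = ν (A j) := by
    intro j
    rw [hν'def, Measure.sum_apply _ (hAmeas j), tsum_fintype]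
    rw [Finset.sum_eq_single_of_mem j (Finset.mem_univ j)
      (fun i _ hij => by rw [hwA i j, if_neg hij]), hwA j j, if_pos rfl]
  have hν'prob : IsProbabilityMeasure ν' := by
    constructor
    rw [← hAcover, measure_iUnion hAdisj hAmeas, tsum_fintype]
    have : ∀ i, ν' (A i) = ν (A i) := hν'A
    calc ∑ i, ν' (A i) = ∑ i, ν (A i) := Finset.sum_congr rfl fun i _ => hν'A i
      _ = ν (⋃ i, A i) := by rw [measure_iUnion hAdisj hAmeas, tsum_fintype]
      _ = 1 := by rw [hAcover]; exact measure_univ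
  haveI := hν'prob
  -- the density
  set f : Ω → ℝ≥0∞ := fun ω => ∑ i, (A i).indicator (fun _ => μ (A i) / ν (A i)) ω with hfdef
  have hf_meas : Measurable f :=
    Finset.measurable_sum _ fun i _ => measurable_const.indicator (hAmeas i)
  have hf_on : ∀ i, ∀ ω ∈ A i, f ω = μ (A i) / ν (A i) := by
    intro i ω hω
    simp only [hfdef]
    rw [Finset.sum_eq_single_of_mem i (Finset.mem_univ i)
      (fun j _ hji => Set.indicator_of_notMem
        (fun hmem => Set.disjoint_left.1 (hAdisj hji) hmem hω) _)]
    exact Set.indicator_of_mem hω _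
  have hwd : ν'.withDensity f = μ := by
    ext S hS
    rw [withDensity_apply _ hS, hν'def, Measure.restrict_sum _ hS, lintegral_sum_measure]
    have hterm : ∀ i, ∫⁻ ω, f ω ∂((w i).restrict S) = μ (S ∩ A i) := by
      intro i
      by_cases hμ : μ (A i) = 0
      · have hR : μ (S ∩ A i) = 0 :=
          le_antisymm (le_trans (measure_mono Set.inter_subset_right) hμ.le) zero_le
        rw [hR]
        by_cases hνi : ν (A i) = 0
        · rw [hwdef]
          simp [hμ, hνi]
        · have hfx : f (x i) = 0 := by
            rw [hf_on i (x i) (hxmem i hνi), hμ, ENNReal.zero_div]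
          refine le_antisymm ?_ zero_le
          rw [hwdef]
          simp only [if_pos hμ]
          rw [Measure.restrict_smul, lintegral_smul_measure]
          calc ν (A i) * ∫⁻ ω, f ω ∂((Measure.dirac (x i)).restrict S)
              ≤ ν (A i) * ∫⁻ ω, f ω ∂(Measure.dirac (x i)) := by
                gcongr
                exact Measure.restrict_le_self
            _ = ν (A i) * f (x i) := by rw [lintegral_dirac' _ hf_meas]
            _ = 0 := by rw [hfx, mul_zero]
      · have hνi := hq i hμ
        rw [hwdef]
        simp only [if_neg hμ]
        rw [Measure.restrict_smul, lintegral_smul_measure,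
          Measure.restrict_restrict hS]
        have hc : ∫⁻ ω in S ∩ A i, f ω ∂μ = (μ (A i) / ν (A i)) * μ (S ∩ A i) := by
          rw [setLIntegral_congr_fun ((hS.inter (hAmeas i)))
            (fun ω hω => hf_on i ω hω.2), setLIntegral_const]
        rw [hc, smul_eq_mul, ← mul_assoc]
        have h1 : ν (A i) / μ (A i) * (μ (A i) / ν (A i)) = 1 := by
          rw [div_eq_mul_inv, div_eq_mul_inv]
          calc ν (A i) * (μ (A i))⁻¹ * (μ (A i) * (ν (A i))⁻¹)
              = (ν (A i) * (ν (A i))⁻¹) * ((μ (A i))⁻¹ * μ (A i)) := by ring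
            _ = 1 := by
              rw [ENNReal.mul_inv_cancel hνi (measure_ne_top ν _),
                ENNReal.inv_mul_cancel hμ (measure_ne_top μ _), one_mul]
        rw [h1, one_mul]
    calc ∑' i, ∫⁻ ω, f ω ∂((w i).restrict S) = ∑' i, μ (S ∩ A i) := by
          exact tsum_congr hterm
      _ = μ (⋃ i, S ∩ A i) := by
          rw [measure_iUnion (hAdisj.mono fun i j h => h.inter_left' S |>.inter_right' S)
            (fun i => hS.inter (hAmeas i))]
      _ = μ S := by rw [← Set.inter_iUnion, hAcover, Set.inter_univ]
  have hac' : μ ≪ ν' := hwd ▸ withDensity_absolutelyContinuous ν' f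
  have hrn : μ.rnDeriv ν' =ᵐ[ν'] f := by
    have h := Measure.rnDeriv_withDensity ν' hf_meas
    rwa [hwd] at h
  have hrnμ : μ.rnDeriv ν' =ᵐ[μ] f := hac'.ae_le hrn
  set g : Ω → ℝ := fun ω =>
    ∑ i, (A i).indicator (fun _ => Real.log ((μ (A i)).toReal / (ν (A i)).toReal)) ω with hgdef
  have hg : ∀ ω, Real.log ((f ω).toReal) = g ω := by
    intro ω
    have hmem : ω ∈ ⋃ i, A i := hAcover ▸ Set.mem_univ ω
    obtain ⟨i, hi⟩ := Set.mem_iUnion.1 hmem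
    rw [hf_on i ω hi]
    have hgω : g ω = Real.log ((μ (A i)).toReal / (ν (A i)).toReal) := by
      simp only [hgdef]
      rw [Finset.sum_eq_single_of_mem i (Finset.mem_univ i)
        (fun j _ hji => Set.indicator_of_notMem
          (fun hmem' => Set.disjoint_left.1 (hAdisj hji) hmem' hi) _)]
      exact Set.indicator_of_mem hi _
    rw [hgω, ENNReal.toReal_div]
  have hllr : llr μ ν' =ᵐ[μ] g := by
    filter_upwards [hrnμ] with ω hω
    rw [llr_def]
    simp only
    rw [hω, hg]
  have hgint : Integrable g μ :=
    integrable_finset_sum _ fun i _ => (integrable_const _).indicator (hAmeas i)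
  have hgval : ∫ ω, g ω ∂μ
      = ∑ i, (μ (A i)).toReal * Real.log ((μ (A i)).toReal / (ν (A i)).toReal) := by
    rw [hgdef, integral_finset_sum _ fun i _ => (integrable_const _).indicator (hAmeas i)]
    refine Finset.sum_congr rfl fun i _ => ?_
    rw [integral_indicator_const _ (hAmeas i)]
    simp [mul_comm, Measure.real]
  have hint' : Integrable (llr μ ν') μ := hgint.congr hllr.symm
  refine ⟨ν', hν'prob, hν'A, ?_⟩
  rw [KLm, if_pos ⟨hac', hint'⟩, integral_congr_ae hllr, hgval, klVec, if_pos]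
  swap
  · intro i hi
    have h0 : μ (A i) ≠ 0 := by
      intro h; rw [h] at hi; simp at hi
    exact ENNReal.toReal_pos (hq i h0) (measure_ne_top ν _)
  congr 1
  refine Finset.sum_congr rfl fun i _ => ?_
  split_ifs with hi
  · rfl
  · push_neg at hi
    have : (μ (A i)).toReal = 0 := le_antisymm hi ENNReal.toReal_nonneg
    rw [this, zero_mul]

lemma klVec_le_KLm {Ω : Type*} [MeasurableSpace Ω] {k : ℕ} (A : Fin k → Set Ω)
    (hAmeas : ∀ i, MeasurableSet (A i))
    (hAdisj : Pairwise (Function.onFun Disjoint A))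
    (hAcover : (⋃ i, A i) = Set.univ)
    (μ ν : Measure Ω) [IsProbabilityMeasure μ] [IsProbabilityMeasure ν] :
    klVec (fun i => (μ (A i)).toReal) (fun i => (ν (A i)).toReal) ≤ KLm μ ν := by
  rw [KLm]
  split_ifs with hC
  · obtain ⟨hac, hint⟩ := hC
    rw [klVec, if_pos]
    swap
    · intro i hi
      have h0 : μ (A i) ≠ 0 := by
        intro h; rw [h] at hi; simp at hi
      exact ENNReal.toReal_pos (fun h => h0 (hac h)) (measure_ne_top ν _)
    apply ENNReal.ofReal_le_ofReal
    have hsum : ∫ x, llr μ ν x ∂μ = ∑ i, ∫ x in A i, llr μ ν x ∂μ := by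
      have h := integral_iUnion (f := llr μ ν) hAmeas
        hAdisj
        (by rw [hAcover]; exact hint.integrableOn)
      rw [hAcover, Measure.restrict_univ, tsum_fintype] at h
      exact h
    rw [hsum]
    refine Finset.sum_le_sum fun i _ => ?_
    split_ifs with hi
    · exact gibbs hac hint (hAmeas i)
    · push_neg at hi
      have h0 : (μ (A i)).toReal = 0 :=
        le_antisymm hi ENNReal.toReal_nonneg
      have hμ0 : μ (A i) = 0 := by
        have := (ENNReal.toReal_eq_zero_iff _).1 h0
        exact this.resolve_right (measure_ne_top μ _)
      rw [Measure.restrict_eq_zero.2 hμ0]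
      simp
  · exact le_top

/-- **Donsker–Varadhan-type suprema coincide for simple functions.** Let
`A 1, …, A k` be a measurable partition of `Ω`, `c 1, …, c k ∈ ℝ`, and
`φ = Σ_i c i·1_{A i}`. Then for every probability measure `μ`,
`sup_ν (∫ φ dν − KL(μ‖ν))` over probability measures `ν` equals
`sup_ν (∫ φ dν − klᵏ((μ(A i))_i ‖ (ν(A i))_i))`, both suprema in the extended
reals. -/
theorem stmt19 {Ω : Type*} [MeasurableSpace Ω] {k : ℕ} (A : Fin k → Set Ω)
    (hAmeas : ∀ i, MeasurableSet (A i))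
    (hAdisj : Pairwise (Function.onFun Disjoint A))
    (hAcover : (⋃ i, A i) = Set.univ)
    (c : Fin k → ℝ) (μ : Measure Ω) [IsProbabilityMeasure μ] :
    sSup {z : EReal | ∃ ν : Measure Ω, IsProbabilityMeasure ν ∧
        z = (((∫ ω, ∑ i, c i * (A i).indicator (fun _ => (1 : ℝ)) ω ∂ν : ℝ)) : EReal)
            - ((KLm μ ν : ℝ≥0∞) : EReal)}
      = sSup {z : EReal | ∃ ν : Measure Ω, IsProbabilityMeasure ν ∧
        z = (((∫ ω, ∑ i, c i * (A i).indicator (fun _ => (1 : ℝ)) ω ∂ν : ℝ)) : EReal)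
            - ((klVec (fun i => (μ (A i)).toReal) (fun i => (ν (A i)).toReal)
                : ℝ≥0∞) : EReal)} := by
  
  apply le_antisymm
  · refine sSup_le ?_
    rintro z ⟨ν, hν, rfl⟩
    refine le_sSup_of_le ⟨ν, hν, rfl⟩ ?_
    exact EReal.sub_le_sub le_rfl
      (EReal.coe_ennreal_le_coe_ennreal_iff.2 (klVec_le_KLm A hAmeas hAdisj hAcover μ ν))
  · refine sSup_le ?_
    rintro z ⟨ν, hν, rfl⟩
    by_cases hT : klVec (fun i => (μ (A i)).toReal) (fun i => (ν (A i)).toReal) = ⊤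
    · rw [hT, EReal.coe_ennreal_top, sub_eq_add_neg]
      simp only [EReal.neg_top, EReal.add_bot]
      exact bot_le
    · have hcond : ∀ i, 0 < (μ (A i)).toReal → 0 < (ν (A i)).toReal := by
        by_contra hc
        rw [klVec, if_neg hc] at hT
        exact hT rfl
      have hq : ∀ i, μ (A i) ≠ 0 → ν (A i) ≠ 0 := by
        intro i h h'
        have := hcond i (ENNReal.toReal_pos h (measure_ne_top μ _))
        rw [h'] at this
        simp at this
      obtain ⟨ν', hν'p, hν'A, hKL⟩ := construct A hAmeas hAdisj hAcover μ ν hq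
      refine le_sSup ⟨ν', hν'p, ?_⟩
      rw [integral_phi A hAmeas c ν, integral_phi A hAmeas c ν', hKL]
      simp only [hν'A]
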